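/- arXiv:2410.22813 — 2 statements merged into one kernel-verified Lean document; each statement's English description precedes it below -/
import Mathlib

section
/- Let (G₁,w₁) and (G₂,w₂) be finite vertex-weighted graphs. If there exists a surjective weight-homomorphism from (G₁,w₁) to (G₂,w₂) and a surjective weight-homomorphism from (G₂,w₂) to (G₁,w₁), then |V(G₁)| = |V(G₂)| and every surjective weight-homomorphism ψ from (G₁,w₁) to (G₂,w₂) is a graph isomorphism from G₁ to G₂. -/
/-! Surjections in both directions force `|V(G₁)| = |V(G₂)|`, so every surjective homomorphism
between the two graphs is bijective. If `ψ : G₁ → G₂` and `φ : G₂ → G₁` are bijective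
homomorphisms, then `φ ∘ ψ` is a permutation of the finite set `V(G₁)`; its inverse is one of its
iterates and hence again a homomorphism, so `φ ∘ ψ`, and with it `ψ`, reflects adjacency. -/

/-- `ψ` is a weight-homomorphism from `(G₁, w₁)` to `(G₂, w₂)`: a graph homomorphism
such that, for every vertex `v` of `G₂`, the total `w₁`-weight of the fiber `ψ⁻¹(v)` is
at most `w₂ v`. -/
def IsWtHom {α β : Type} [Fintype α] [DecidableEq β]
    (G₁ : SimpleGraph α) (w₁ : α → ℕ) (G₂ : SimpleGraph β) (w₂ : β → ℕ)
    (ψ : G₁ →g G₂) : Prop :=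
  ∀ v : β, ∑ u ∈ Finset.univ.filter (fun u => ψ u = v), w₁ u ≤ w₂ v

namespace SimpleGraph.Hom

open Function

variable {V W : Type*} {G : SimpleGraph V} {H : SimpleGraph W}

theorem map_adj_iterate (θ : G →g G) (n : ℕ) {u v : V} (h : G.Adj u v) :
    G.Adj (θ^[n] u) (θ^[n] v) := by
  induction n generalizing u v with
  | zero => exact h
  | succ n ih => exact ih (θ.map_adj h)

theorem adj_of_map_adj_of_bijective [Finite V] (θ : G →g G) (hθ : Bijective θ) {u v : V}
    (h : G.Adj (θ u) (θ v)) : G.Adj u v := by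
  set e := Equiv.ofBijective θ hθ
  have hperiod : θ^[orderOf e] = id := by
    rw [← Equiv.coe_ofBijective θ hθ, ← Equiv.Perm.coe_pow, pow_orderOf_eq_one]
    rfl
  have hinv (x : V) : θ^[orderOf e - 1] (θ x) = x := by
    rw [← iterate_succ_apply, Nat.succ_eq_add_one, Nat.sub_add_cancel (orderOf_pos e), hperiod,
      id_eq]
  simpa only [hinv] using θ.map_adj_iterate (orderOf e - 1) h

theorem map_adj_iff_of_bijective [Finite V] (ψ : G →g H) (φ : H →g G) (hψ : Bijective ψ)
    (hφ : Bijective φ) {u v : V} : H.Adj (ψ u) (ψ v) ↔ G.Adj u v :=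
  ⟨fun h => (φ.comp ψ).adj_of_map_adj_of_bijective (hφ.comp hψ) (φ.map_adj h), ψ.map_adj⟩

end SimpleGraph.Hom

theorem stmt_4_general {α β : Type} [Fintype α] [Fintype β] [DecidableEq α] [DecidableEq β]
    (G₁ : SimpleGraph α) (w₁ : α → ℕ)
    (G₂ : SimpleGraph β) (w₂ : β → ℕ)
    (h₁ : ∃ ψ : G₁ →g G₂, Function.Surjective ψ ∧ IsWtHom G₁ w₁ G₂ w₂ ψ)
    (h₂ : ∃ ψ : G₂ →g G₁, Function.Surjective ψ ∧ IsWtHom G₂ w₂ G₁ w₁ ψ) :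
    Fintype.card α = Fintype.card β ∧
      ∀ ψ : G₁ →g G₂, Function.Surjective ψ → IsWtHom G₁ w₁ G₂ w₂ ψ →
        Function.Bijective ψ ∧ ∀ u v, G₁.Adj u v ↔ G₂.Adj (ψ u) (ψ v) := by
  obtain ⟨ψ₀, hψ₀, -⟩ := h₁
  obtain ⟨φ, hφ, -⟩ := h₂
  have hcard : Fintype.card α = Fintype.card β :=
    (Fintype.card_le_of_surjective φ hφ).antisymm (Fintype.card_le_of_surjective ψ₀ hψ₀)
  refine ⟨hcard, fun ψ hψ _ => ?_⟩
  have hψb := (Fintype.bijective_iff_surjective_and_card ψ).2 ⟨hψ, hcard⟩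
  have hφb := (Fintype.bijective_iff_surjective_and_card φ).2 ⟨hφ, hcard.symm⟩
  exact ⟨hψb, fun u v => (ψ.map_adj_iff_of_bijective φ hψb hφb).symm⟩

/-- If there are surjective weight-homomorphisms between `(G₁, w₁)` and `(G₂, w₂)` in
both directions, then the vertex sets have the same cardinality and every surjective
weight-homomorphism from `(G₁, w₁)` to `(G₂, w₂)` is a graph isomorphism. -/
theorem stmt_4 {α β : Type} [Fintype α] [Fintype β] [DecidableEq α] [DecidableEq β]
    (G₁ : SimpleGraph α) (w₁ : α → ℕ) (hw₁ : ∀ v, 0 < w₁ v)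
    (G₂ : SimpleGraph β) (w₂ : β → ℕ) (hw₂ : ∀ v, 0 < w₂ v)
    (h₁ : ∃ ψ : G₁ →g G₂, Function.Surjective ψ ∧ IsWtHom G₁ w₁ G₂ w₂ ψ)
    (h₂ : ∃ ψ : G₂ →g G₁, Function.Surjective ψ ∧ IsWtHom G₂ w₂ G₁ w₁ ψ) :
    Fintype.card α = Fintype.card β ∧
      ∀ ψ : G₁ →g G₂, Function.Surjective ψ → IsWtHom G₁ w₁ G₂ w₂ ψ →
        Function.Bijective ψ ∧ ∀ u v, G₁.Adj u v ↔ G₂.Adj (ψ u) (ψ v) :=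
  stmt_4_general G₁ w₁ G₂ w₂ h₁ h₂
end

section
/- Let (G,w) be a finite vertex-weighted graph and H a simple graph. Then X_H(G,w) = Σ_{S⊆E(G)} (−1)^{|S|} · W_{\overline{H}}(G_S, w), where G_S denotes the spanning subgraph of G with vertex set V(G) and edge set S, and \overline{H} is the complement graph of H. -/
/-- The `H`-chromatic function of a finite vertex-weighted graph `(G, w)`, as a formal
power series (with integer coefficients) in variables indexed by the vertices of `H`:
the coefficient of the monomial with exponent vector `d` is the number of homomorphisms
`φ : G → H` whose associated monomial `∏_{v} x_{φ v} ^ (w v)` has exponent vector `d`. -/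
noncomputable def chromFun {α β : Type} [Fintype α] (G : SimpleGraph α) (w : α → ℕ)
    (H : SimpleGraph β) : MvPowerSeries β ℤ :=
  fun d => (Nat.card {φ : G →g H //
    Finsupp.mapDomain (⇑φ) (Finsupp.equivFunOnFinite.symm w) = d} : ℤ)

/-- The weak-homomorphism analogue `W_H(G, w)` of the `H`-chromatic function: the sum
runs over all maps `φ` such that every edge of `G` is sent to an edge of `H` or
collapsed to a single vertex. -/
noncomputable def weakChromFun {α β : Type} [Fintype α] (G : SimpleGraph α) (w : α → ℕ)
    (H : SimpleGraph β) : MvPowerSeries β ℤ :=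
  fun d => (Nat.card {φ : α → β //
    (∀ u v, G.Adj u v → H.Adj (φ u) (φ v) ∨ φ u = φ v) ∧
    Finsupp.mapDomain φ (Finsupp.equivFunOnFinite.symm w) = d} : ℤ)

open Finset

private lemma le_mapDomain_apply {α β : Type} [DecidableEq β] (φ : α → β) (l : α →₀ ℕ) (a : α) :
    l a ≤ Finsupp.mapDomain φ l (φ a) := by
  classical
  rw [Finsupp.mapDomain, Finsupp.sum_apply]
  by_cases h : a ∈ l.support
  · calc l a = Finsupp.single (φ a) (l a) (φ a) := by simp
      _ ≤ _ := Finset.single_le_sum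
        (f := fun a' => Finsupp.single (φ a') (l a') (φ a)) (fun i _ => Nat.zero_le _) h
  · simp [Finsupp.notMem_support_iff.mp h]

private lemma finite_fiber {α β : Type} [Fintype α] (w : α → ℕ) (hw : ∀ v, 0 < w v)
    (d : β →₀ ℕ) :
    Finite {φ : α → β // Finsupp.mapDomain φ (Finsupp.equivFunOnFinite.symm w) = d} := by
  classical
  apply Finite.of_injective (β := α → ↥d.support)
    (f := fun t a => ⟨t.1 a, by
      rw [Finsupp.mem_support_iff]
      have h1 : w a ≤ d (t.1 a) := by
        have := le_mapDomain_apply t.1 (Finsupp.equivFunOnFinite.symm w) a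
        rwa [t.2] at this
      have := hw a; omega⟩)
  intro s t h
  ext a
  exact congrArg Subtype.val (congrFun h a)

private lemma card_subtype_and {γ : Type} (F P : γ → Prop) [Fintype {x : γ // F x}]
    [DecidablePred fun t : {x : γ // F x} => P t.1] :
    Nat.card {x : γ // P x ∧ F x} =
      (Finset.univ.filter (fun t : {x : γ // F x} => P t.1)).card := by
  have e : {x : γ // P x ∧ F x} ≃ {t : {x : γ // F x} // P t.1} :=
    ⟨fun p => ⟨⟨p.1, p.2.2⟩, p.2.1⟩, fun q => ⟨q.1.1, q.2, q.1.2⟩,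
     fun _ => rfl, fun _ => rfl⟩
  rw [Nat.card_congr e, Nat.card_eq_fintype_card, Fintype.card_subtype]

/-- `X_H(G,w) = Σ_{S ⊆ E(G)} (-1)^{|S|} W_{H̄}(G_S, w)` where `G_S` is the spanning
subgraph of `G` with edge set `S` and `H̄` is the complement of `H`. -/
theorem stmt_5 {α β : Type} [Fintype α] [DecidableEq α]
    (G : SimpleGraph α) [DecidableRel G.Adj] (w : α → ℕ) (hw : ∀ v, 0 < w v)
    (H : SimpleGraph β) :
    chromFun G w H =
      ∑ S ∈ G.edgeFinset.powerset,
        (-1 : ℤ) ^ S.card • weakChromFun (SimpleGraph.fromEdgeSet (↑S : Set (Sym2 α))) w Hᶜ := by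
  classical
  ext d
  rw [map_sum]
  set wfin := Finsupp.equivFunOnFinite.symm w with hwfin
  haveI : Finite {φ : α → β // Finsupp.mapDomain φ wfin = d} := finite_fiber w hw d
  haveI := Fintype.ofFinite {φ : α → β // Finsupp.mapDomain φ wfin = d}
  set T := {φ : α → β // Finsupp.mapDomain φ wfin = d} with hT
  -- LHS
  have hL : (MvPowerSeries.coeff d) (chromFun G w H) =
      ((Finset.univ.filter
        (fun t : T => ∀ u v, G.Adj u v → H.Adj (t.1 u) (t.1 v))).card : ℤ) := by
    have h0 : (MvPowerSeries.coeff d) (chromFun G w H) =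
        (Nat.card {φ : G →g H // Finsupp.mapDomain ⇑φ wfin = d} : ℤ) := rfl
    rw [h0]
    congr 1
    have e : {φ : G →g H // Finsupp.mapDomain ⇑φ wfin = d} ≃
        {φ : α → β //
          (∀ u v, G.Adj u v → H.Adj (φ u) (φ v)) ∧ Finsupp.mapDomain φ wfin = d} :=
      ⟨fun p => ⟨⇑p.1, fun u v h => p.1.map_rel h, p.2⟩,
       fun q => ⟨⟨q.1, fun {u v} h => q.2.1 u v h⟩, q.2.2⟩,
       fun _ => rfl, fun _ => rfl⟩
    rw [Nat.card_congr e, card_subtype_and]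
  rw [hL]
  -- RHS terms
  have hR : ∀ S ∈ G.edgeFinset.powerset,
      (MvPowerSeries.coeff d)
        ((-1 : ℤ) ^ S.card • weakChromFun (SimpleGraph.fromEdgeSet (↑S : Set (Sym2 α))) w Hᶜ) =
      (-1 : ℤ) ^ S.card *
        ((Finset.univ.filter
          (fun t : T => ∀ e ∈ S, Sym2.map t.1 e ∉ H.edgeSet)).card : ℤ) := by
    intro S hS
    rw [map_smul, smul_eq_mul]
    congr 1
    have h0 : (MvPowerSeries.coeff d)
        (weakChromFun (SimpleGraph.fromEdgeSet (↑S : Set (Sym2 α))) w Hᶜ) =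
        (Nat.card {φ : α → β //
          (∀ u v, (SimpleGraph.fromEdgeSet (↑S : Set (Sym2 α))).Adj u v →
            Hᶜ.Adj (φ u) (φ v) ∨ φ u = φ v) ∧ Finsupp.mapDomain φ wfin = d} : ℤ) := rfl
    rw [h0]
    congr 1
    have hpred : ∀ φ : α → β,
        (∀ u v, (SimpleGraph.fromEdgeSet (↑S : Set (Sym2 α))).Adj u v →
          Hᶜ.Adj (φ u) (φ v) ∨ φ u = φ v) ↔
        (∀ e ∈ S, Sym2.map φ e ∉ H.edgeSet) := by
      intro φ
      constructor
      · intro h e heS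
        induction e with
        | h u v =>
          have heG : G.Adj u v := by
            have h1 : s(u, v) ∈ G.edgeFinset := Finset.mem_powerset.mp hS heS
            rwa [SimpleGraph.mem_edgeFinset, SimpleGraph.mem_edgeSet] at h1
          have h2 := h u v (by
            rw [SimpleGraph.fromEdgeSet_adj]
            exact ⟨heS, heG.ne⟩)
          rw [Sym2.map_pair_eq, SimpleGraph.mem_edgeSet]
          rcases h2 with h2 | h2
          · exact ((SimpleGraph.compl_adj H _ _).mp h2).2
          · rw [h2]; exact fun hc => H.irrefl hc
      · intro h u v hadj
        rw [SimpleGraph.fromEdgeSet_adj] at hadj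
        obtain ⟨heS, hne⟩ := hadj
        have h1 := h _ heS
        rw [Sym2.map_pair_eq, SimpleGraph.mem_edgeSet] at h1
        by_cases hc : φ u = φ v
        · exact Or.inr hc
        · exact Or.inl ((SimpleGraph.compl_adj H _ _).mpr ⟨hc, h1⟩)
    have e : {φ : α → β //
        (∀ u v, (SimpleGraph.fromEdgeSet (↑S : Set (Sym2 α))).Adj u v →
          Hᶜ.Adj (φ u) (φ v) ∨ φ u = φ v) ∧ Finsupp.mapDomain φ wfin = d} ≃
        {φ : α → β // (∀ e ∈ S, Sym2.map φ e ∉ H.edgeSet) ∧ Finsupp.mapDomain φ wfin = d} :=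
      Equiv.subtypeEquivRight (fun φ => and_congr_left fun _ => hpred φ)
    rw [Nat.card_congr e, card_subtype_and]
  rw [Finset.sum_congr rfl hR]
  -- algebra
  have hcard : ∀ S : Finset (Sym2 α),
      ((Finset.univ.filter (fun t : T => ∀ e ∈ S, Sym2.map t.1 e ∉ H.edgeSet)).card : ℤ) =
      ∑ t : T, if (∀ e ∈ S, Sym2.map t.1 e ∉ H.edgeSet) then (1 : ℤ) else 0 :=
    fun S => (Finset.sum_boole _ _).symm
  simp_rw [hcard, Finset.mul_sum]
  rw [Finset.sum_comm]
  have key : ∀ t : T,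
      ∑ S ∈ G.edgeFinset.powerset,
        (-1 : ℤ) ^ S.card * (if (∀ e ∈ S, Sym2.map t.1 e ∉ H.edgeSet) then (1 : ℤ) else 0) =
      if (∀ u v, G.Adj u v → H.Adj (t.1 u) (t.1 v)) then (1 : ℤ) else 0 := by
    intro t
    set B : Finset (Sym2 α) := G.edgeFinset.filter (fun e => Sym2.map t.1 e ∉ H.edgeSet)
      with hBdef
    have hsub : B.powerset ⊆ G.edgeFinset.powerset :=
      Finset.powerset_mono.mpr (Finset.filter_subset _ _)
    rw [← Finset.sum_subset hsub (by
      intro S hSE hSB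
      rw [if_neg, mul_zero]
      intro hall
      exact hSB (Finset.mem_powerset.mpr (fun e he => Finset.mem_filter.mpr
        ⟨Finset.mem_powerset.mp hSE he, hall e he⟩)))]
    have hone : ∀ S ∈ B.powerset,
        (-1 : ℤ) ^ S.card * (if (∀ e ∈ S, Sym2.map t.1 e ∉ H.edgeSet) then (1 : ℤ) else 0) =
        (-1 : ℤ) ^ S.card := by
      intro S hSB
      rw [if_pos, mul_one]
      exact fun e he => (Finset.mem_filter.mp (Finset.mem_powerset.mp hSB he)).2
    rw [Finset.sum_congr rfl hone, Finset.sum_powerset_neg_one_pow_card]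
    refine if_congr ?_ rfl rfl
    rw [Finset.filter_eq_empty_iff]
    constructor
    · intro hB u v hadj
      have := hB (SimpleGraph.mem_edgeFinset.mpr (G.mem_edgeSet.mpr hadj))
      rw [not_not, Sym2.map_pair_eq, SimpleGraph.mem_edgeSet] at this
      exact this
    · intro hhom e he
      rw [not_not]
      induction e with
      | h u v =>
        rw [SimpleGraph.mem_edgeFinset, SimpleGraph.mem_edgeSet] at he
        rw [Sym2.map_pair_eq, SimpleGraph.mem_edgeSet]
        exact hhom u v he
  rw [Finset.sum_congr rfl (fun t _ => key t), Finset.sum_boole]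
end
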